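/- Let p > 1 and m > 0. Define V(u) = I(u) - Q(u)/(p+1) where I is quadratically homogeneous, Q is (p+1)-homogeneous, I(u) > 0, Q(u) > 0 for u ≠ 0, and m^{(p+1)/2} = inf{ I(u)^{(p+1)/2}/Q(u) : u ≠ 0 }. Then d := inf{ V(u) : u ≠ 0, 2·I(u) = Q(u) } equals ((p-1)/(p+1))·2^{2/(p-1)}·m^{(p+1)/(p-1)}. -/
import Mathlib

open Real

/-- Lemma 3.1: depth of the potential well. -/
theorem depth_of_potential_well {X : Type*} [AddCommGroup X] [Module ℝ X]
    (p m : ℝ) (hp : 1 < p) (hm : 0 < m) (I Q : X → ℝ)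
    (hIhom : ∀ (c : ℝ) (u : X), I (c • u) = c ^ 2 * I u)
    (hQhom : ∀ (c : ℝ) (u : X), Q (c • u) = |c| ^ (p + 1) * Q u)
    (hIpos : ∀ u : X, u ≠ 0 → 0 < I u)
    (hQpos : ∀ u : X, u ≠ 0 → 0 < Q u)
    (hbest : m ^ ((p + 1) / 2) = sInf {x : ℝ | ∃ u : X, u ≠ 0 ∧ x = I u ^ ((p + 1) / 2) / Q u}) :
    sInf {x : ℝ | ∃ u : X, u ≠ 0 ∧ 2 * I u = Q u ∧ x = I u - Q u / (p + 1)} =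
      ((p - 1) / (p + 1)) * 2 ^ (2 / (p - 1)) * m ^ ((p + 1) / (p - 1)) := by
  have hp1 : (0:ℝ) < p - 1 := by linarith
  have hp2 : (0:ℝ) < p + 1 := by linarith
  set R := {x : ℝ | ∃ u : X, u ≠ 0 ∧ x = I u ^ ((p + 1) / 2) / Q u} with hRdef
  set S := {x : ℝ | ∃ u : X, u ≠ 0 ∧ 2 * I u = Q u ∧ x = I u - Q u / (p + 1)} with hSdef
  set C : ℝ := (p - 1) / (p + 1) * 2 ^ (2 / (p - 1)) with hCdef
  have hCpos : 0 < C := mul_pos (div_pos hp1 hp2) (rpow_pos_of_pos two_pos _)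
  have hmpos : 0 < m ^ ((p + 1) / 2) := rpow_pos_of_pos hm _
  have hVform : ∀ y : ℝ, y - 2 * y / (p + 1) = (p - 1) / (p + 1) * y := by
    intro y
    field_simp [hp2.ne']
    ring
  -- R is nonempty
  have hRne : R.Nonempty := by
    by_contra h
    rw [Set.not_nonempty_iff_eq_empty] at h
    rw [h, Real.sInf_empty] at hbest
    linarith
  have hRbdd : BddBelow R := by
    refine ⟨0, ?_⟩
    rintro x ⟨u, hu, rfl⟩
    exact le_of_lt (div_pos (rpow_pos_of_pos (hIpos u hu) _) (hQpos u hu))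
  have hSbdd : BddBelow S := by
    refine ⟨0, ?_⟩
    rintro x ⟨u, hu, hc, rfl⟩
    have hI := hIpos u hu
    rw [← hc, hVform]
    positivity
  -- scaling: for every u ≠ 0, C * (I u ^ ((p+1)/2) / Q u) ^ (2/(p-1)) ∈ S
  have key : ∀ u : X, u ≠ 0 →
      C * (I u ^ ((p + 1) / 2) / Q u) ^ (2 / (p - 1)) ∈ S := by
    intro u hu
    have hI := hIpos u hu
    have hQ := hQpos u hu
    set a : ℝ := 2 * I u / Q u with hadef
    have ha : 0 < a := div_pos (by linarith) hQ
    set l : ℝ := a ^ (1 / (p - 1)) with hldef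
    have hl : 0 < l := rpow_pos_of_pos ha _
    have hv : l • u ≠ 0 := smul_ne_zero (ne_of_gt hl) hu
    have hl2 : l ^ 2 = a ^ (2 / (p - 1)) := by
      rw [hldef, ← rpow_natCast (a ^ (1 / (p - 1))) 2, ← rpow_mul ha.le]
      congr 1
      push_cast
      ring
    have hlp : l ^ (p - 1) = a := by
      rw [hldef, ← rpow_mul ha.le]
      rw [one_div_mul_cancel (ne_of_gt hp1), rpow_one]
    have hIv : I (l • u) = a ^ (2 / (p - 1)) * I u := by
      rw [hIhom, hl2]
    have hQv : Q (l • u) = l ^ (p + 1) * Q u := by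
      rw [hQhom, abs_of_pos hl]
    have hlr2 : l ^ ((2:ℝ)) = l ^ (2:ℕ) := by
      rw [← rpow_natCast l 2]
      norm_num
    have hlpp : l ^ (p + 1) = a * l ^ 2 := by
      have hsplit : p + 1 = (p - 1) + 2 := by ring
      rw [hsplit, rpow_add hl, hlp, hlr2]
    have hcon : 2 * I (l • u) = Q (l • u) := by
      rw [hIv, hQv, hlpp, ← hl2, hadef]
      field_simp
    refine ⟨l • u, hv, hcon, ?_⟩
    have hval : a ^ (2 / (p - 1)) * I u =
        2 ^ (2 / (p - 1)) * (I u ^ ((p + 1) / 2) / Q u) ^ (2 / (p - 1)) := by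
      rw [hadef, div_rpow (by linarith : (0:ℝ) ≤ 2 * I u) hQ.le,
        div_rpow (rpow_nonneg hI.le _) hQ.le,
        mul_rpow (by norm_num : (0:ℝ) ≤ 2) hI.le,
        ← rpow_mul hI.le]
      have he : (p + 1) / 2 * (2 / (p - 1)) = 2 / (p - 1) + 1 := by
        field_simp
        ring
      rw [he, rpow_add hI, rpow_one]
      ring
    rw [← hcon, hIv, hval, hVform, hCdef]
    ring
  -- S is nonempty
  obtain ⟨x0, u0, hu0, -⟩ := id hRne
  have hSne : S.Nonempty := ⟨_, key u0 hu0⟩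
  set T : ℝ := C * m ^ ((p + 1) / (p - 1)) with hTdef
  have hTpos : 0 < T := mul_pos hCpos (rpow_pos_of_pos hm _)
  -- lower bound : T ≤ every element of S
  have hlow : ∀ x ∈ S, T ≤ x := by
    rintro x ⟨u, hu, hc, rfl⟩
    have hI := hIpos u hu
    have hQ := hQpos u hu
    have hray : m ^ ((p + 1) / 2) ≤ I u ^ ((p + 1) / 2) / Q u := by
      rw [hbest]; exact csInf_le hRbdd ⟨u, hu, rfl⟩
    have hsplit : I u ^ ((p + 1) / 2) = I u ^ ((p - 1) / 2) * I u := by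
      have h : (p + 1) / 2 = (p - 1) / 2 + 1 := by ring
      rw [h, rpow_add hI, rpow_one]
    have h2m : 2 * m ^ ((p + 1) / 2) ≤ I u ^ ((p - 1) / 2) := by
      rw [← hc, hsplit, le_div_iff₀ (by linarith : (0:ℝ) < 2 * I u)] at hray
      nlinarith [hray, hI]
    have hIbound : 2 ^ (2 / (p - 1)) * m ^ ((p + 1) / (p - 1)) ≤ I u := by
      have h1 : (2 * m ^ ((p + 1) / 2)) ^ (2 / (p - 1)) ≤
          (I u ^ ((p - 1) / 2)) ^ (2 / (p - 1)) :=
        rpow_le_rpow (by positivity) h2m (by positivity)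
      rw [← rpow_mul hI.le] at h1
      have he1 : (p - 1) / 2 * (2 / (p - 1)) = 1 := by
        field_simp
      rw [he1, rpow_one] at h1
      rw [mul_rpow (by norm_num) hmpos.le, ← rpow_mul hm.le] at h1
      have he2 : (p + 1) / 2 * (2 / (p - 1)) = (p + 1) / (p - 1) := by
        rw [div_mul_div_comm]
        rw [div_eq_div_iff (by positivity) hp1.ne']
        ring
      rwa [he2] at h1
    calc T = (p - 1) / (p + 1) * (2 ^ (2 / (p - 1)) * m ^ ((p + 1) / (p - 1))) := by
            rw [hTdef, hCdef]; ring
      _ ≤ (p - 1) / (p + 1) * I u := by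
            exact mul_le_mul_of_nonneg_left hIbound (le_of_lt (div_pos hp1 hp2))
      _ = I u - Q u / (p + 1) := by rw [← hc, hVform]
  have hge : T ≤ sInf S := le_csInf hSne hlow
  -- upper bound
  have hle : sInf S ≤ T := by
    set d : ℝ := sInf S with hddef
    have hd : 0 < d := lt_of_lt_of_le hTpos hge
    have hRlow : ∀ x ∈ R, (d / C) ^ ((p - 1) / 2) ≤ x := by
      rintro x ⟨u, hu, rfl⟩
      have hr : 0 < I u ^ ((p + 1) / 2) / Q u :=
        div_pos (rpow_pos_of_pos (hIpos u hu) _) (hQpos u hu)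
      have hdle : d ≤ C * (I u ^ ((p + 1) / 2) / Q u) ^ (2 / (p - 1)) :=
        csInf_le hSbdd (key u hu)
      have hdC : d / C ≤ (I u ^ ((p + 1) / 2) / Q u) ^ (2 / (p - 1)) := by
        rw [div_le_iff₀ hCpos]; linarith [hdle]
      have h1 : (d / C) ^ ((p - 1) / 2) ≤
          ((I u ^ ((p + 1) / 2) / Q u) ^ (2 / (p - 1))) ^ ((p - 1) / 2) :=
        rpow_le_rpow (by positivity) hdC (by positivity)
      rw [← rpow_mul hr.le] at h1
      have he : 2 / (p - 1) * ((p - 1) / 2) = 1 := by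
        field_simp
      rwa [he, rpow_one] at h1
    have hmge : (d / C) ^ ((p - 1) / 2) ≤ m ^ ((p + 1) / 2) := by
      rw [hbest]; exact le_csInf hRne hRlow
    have h2 : ((d / C) ^ ((p - 1) / 2)) ^ (2 / (p - 1)) ≤
        (m ^ ((p + 1) / 2)) ^ (2 / (p - 1)) :=
      rpow_le_rpow (by positivity) hmge (by positivity)
    rw [← rpow_mul (by positivity : (0:ℝ) ≤ d / C), ← rpow_mul hm.le] at h2
    have he1 : (p - 1) / 2 * (2 / (p - 1)) = 1 := by
      field_simp
    have he2 : (p + 1) / 2 * (2 / (p - 1)) = (p + 1) / (p - 1) := by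
      rw [div_mul_div_comm]
      rw [div_eq_div_iff (by positivity) hp1.ne']
      ring
    rw [he1, he2, rpow_one, div_le_iff₀ hCpos] at h2
    rw [hTdef]; linarith [h2]
  have hfin : sInf S = T := le_antisymm hle hge
  rw [hfin, hTdef, hCdef]
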